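/- Fix t > 0 and let μ(x) = e^{−1}·(x+t)·(1 + t/x)^{x/t} for x > 0. Let x₁, x₂, y₁, y₂ ∈ (0, 1−t) be such that min(x₁, x₂, y₁, y₂) ∈ {y₁, y₂} and y₁ + y₂ ≤ x₁ + x₂. Then μ(x₁)·μ(x₂) ≥ μ(y₁)·μ(y₂). -/

import Mathlib

/-!
With `H = negMulLog`, the identric mean is `μ(x) = exp ((H x - H (x + t)) / t - 1)`, so the claim
is `D y₁ + D y₂ ≤ D x₁ + D x₂` for `D x = H x - H (x + t)` (`entropyDrop t`). Its derivative
`log (1 + t / x)` is positive and decreasing, so `D` is increasing and concave on `(0, ∞)`.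
For such a function it suffices that the smallest `y` lies below both `x`'s and that
`y₁ + y₂ ≤ x₁ + x₂`: lowering the larger `y` to an `x` and raising the smaller one by the same
amount only increases the sum, by concavity, and monotonicity does the rest.
-/

/-- The identric mean of `x` and `x + t`:
`μ(x) = e⁻¹ (x+t) (1 + t/x)^(x/t)`. -/
noncomputable def identric (t x : ℝ) : ℝ :=
  (Real.exp 1)⁻¹ * (x + t) * (1 + t / x) ^ (x / t)

open Real Set

theorem ConcaveOn.map_add_map_le_of_mem_Icc {s : Set ℝ} {f : ℝ → ℝ} (hf : ConcaveOn ℝ s f)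
    {y z a : ℝ} (hy : y ∈ s) (hz : z ∈ s) (ha : a ∈ Icc y z) :
    f y + f z ≤ f a + f (y + z - a) := by
  obtain ⟨hya, haz⟩ := ha
  rcases hya.lt_or_eq with hya | rfl
  · have hyz : 0 < z - y := by linarith
    set θ := (z - a) / (z - y) with hθ
    have hθ0 : 0 ≤ θ := div_nonneg (by linarith) hyz.le
    have hθ1 : 0 ≤ 1 - θ := by rw [hθ, one_sub_div hyz.ne']; exact div_nonneg (by linarith) hyz.le
    -- `a` and `y + z - a` are the convex combinations of `y, z` with weights `(θ, 1 - θ)` swapped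
    have hcombo : θ • y + (1 - θ) • z = a := by
      simp only [smul_eq_mul, hθ]; field_simp; ring
    have hcombo' : (1 - θ) • y + θ • z = y + z - a := by
      simp only [smul_eq_mul, hθ]; field_simp; ring
    have h₁ := hf.2 hy hz hθ0 hθ1 (by ring)
    have h₂ := hf.2 hy hz hθ1 hθ0 (by ring)
    rw [hcombo] at h₁
    rw [hcombo'] at h₂
    simp only [smul_eq_mul] at h₁ h₂
    linarith
  · simp

theorem ConcaveOn.map_add_map_le_of_monotoneOn {s : Set ℝ} {f : ℝ → ℝ} (hf : ConcaveOn ℝ s f)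
    (hf_mono : MonotoneOn f s) {y z a b : ℝ} (hy : y ∈ s) (hz : z ∈ s) (ha : a ∈ s) (hb : b ∈ s)
    (hya : y ≤ a) (hyb : y ≤ b) (hsum : y + z ≤ a + b) :
    f y + f z ≤ f a + f b := by
  rcases le_or_gt z b with hzb | hbz
  · linarith [hf_mono hy ha hya, hf_mono hz hb hzb]
  · -- pull `z` back to `b`, moving `y` up by the same amount to `w ≤ a`
    set w := y + z - b
    have hw : w ∈ s := hf.1.ordConnected.out hy ha ⟨by linarith, by linarith⟩
    have hpair := hf.map_add_map_le_of_mem_Icc hy hz ⟨hyb, hbz.le⟩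
    linarith [hf_mono hw ha (by linarith : w ≤ a)]

noncomputable def entropyDrop (t x : ℝ) : ℝ := negMulLog x - negMulLog (x + t)

theorem hasDerivAt_entropyDrop {t x : ℝ} (hx : x ≠ 0) (hxt : x + t ≠ 0) :
    HasDerivAt (entropyDrop t) (log (x + t) - log x) x := by
  have h := (hasDerivAt_negMulLog hx).sub
    ((hasDerivAt_negMulLog hxt).comp x ((hasDerivAt_id x).add_const t))
  exact h.congr_deriv (by simp only [mul_one]; ring)

theorem monotoneOn_entropyDrop {t : ℝ} (ht : 0 ≤ t) : MonotoneOn (entropyDrop t) (Ioi 0) := by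
  have hderiv : ∀ x ∈ Ioi (0 : ℝ), HasDerivAt (entropyDrop t) (log (x + t) - log x) x :=
    fun x hx => hasDerivAt_entropyDrop (ne_of_gt hx) (by linarith [mem_Ioi.mp hx])
  refine monotoneOn_of_hasDerivWithinAt_nonneg (f' := fun x => log (x + t) - log x) (convex_Ioi 0)
    (fun x hx => (hderiv x hx).continuousAt.continuousWithinAt) (fun x hx => ?_) (fun x hx => ?_)
  all_goals rw [interior_Ioi] at hx
  · exact (hderiv x hx).hasDerivWithinAt
  · exact sub_nonneg.mpr (log_le_log hx (by linarith))

theorem concaveOn_entropyDrop {t : ℝ} (ht : 0 ≤ t) : ConcaveOn ℝ (Ioi 0) (entropyDrop t) := by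
  have hderiv : ∀ x ∈ Ioi (0 : ℝ), HasDerivAt (entropyDrop t) (log (x + t) - log x) x :=
    fun x hx => hasDerivAt_entropyDrop (ne_of_gt hx) (by linarith [mem_Ioi.mp hx])
  refine AntitoneOn.concaveOn_of_deriv (convex_Ioi 0)
    (fun x hx => (hderiv x hx).continuousAt.continuousWithinAt)
    (fun x hx => (hderiv x (interior_subset hx)).differentiableAt.differentiableWithinAt) ?_
  rw [interior_Ioi]
  intro x hx y hy hxy
  rw [mem_Ioi] at hx hy
  rw [(hderiv x hx).deriv, (hderiv y hy).deriv, ← log_div (by linarith) hy.ne',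
    ← log_div (by linarith) hx.ne', add_div, add_div, div_self hx.ne', div_self hy.ne']
  exact log_le_log (by positivity) (by gcongr)

theorem identric_eq_exp {t x : ℝ} (ht : t ≠ 0) (hx : 0 < x) (hxt : 0 < x + t) :
    identric t x = exp (entropyDrop t x / t - 1) := by
  have hbase : 1 + t / x = (x + t) / x := by field_simp
  have hexponent : entropyDrop t x / t - 1 = (log (x + t) - log x) * (x / t) + log (x + t) - 1 := by
    unfold entropyDrop negMulLog; field_simp; ring
  rw [identric, hbase, rpow_def_of_pos (by positivity), log_div hxt.ne' hx.ne', hexponent, exp_sub,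
    exp_add, exp_log hxt]
  ring

theorem identric_mul_identric_le {t y z a b : ℝ} (ht : 0 < t) (hy : 0 < y) (hz : 0 < z)
    (hya : y ≤ a) (hyb : y ≤ b) (hsum : y + z ≤ a + b) :
    identric t y * identric t z ≤ identric t a * identric t b := by
  have ha : 0 < a := hy.trans_le hya
  have hb : 0 < b := hy.trans_le hyb
  have hdrop : entropyDrop t y + entropyDrop t z ≤ entropyDrop t a + entropyDrop t b :=
    (concaveOn_entropyDrop ht.le).map_add_map_le_of_monotoneOn (monotoneOn_entropyDrop ht.le)
      hy hz ha hb hya hyb hsum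
  simp only [identric_eq_exp ht.ne', hy, hz, ha, hb, add_pos, ht, ← exp_add, exp_le_exp]
  have := div_le_div_of_nonneg_right hdrop ht.le
  rw [add_div, add_div] at this
  linarith

theorem identric_prod_ge_general (t : ℝ) (ht : 0 < t)
    (x₁ x₂ y₁ y₂ : ℝ)
    (hy₁ : y₁ ∈ Set.Ioo (0 : ℝ) (1 - t)) (hy₂ : y₂ ∈ Set.Ioo (0 : ℝ) (1 - t))
    (hmin : min (min x₁ x₂) (min y₁ y₂) = y₁ ∨ min (min x₁ x₂) (min y₁ y₂) = y₂)
    (hsum : y₁ + y₂ ≤ x₁ + x₂) :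
    identric t y₁ * identric t y₂ ≤ identric t x₁ * identric t x₂ := by
  have hle_x : ∀ {y}, min (min x₁ x₂) (min y₁ y₂) = y → y ≤ x₁ ∧ y ≤ x₂ :=
    fun h => le_min_iff.mp (h ▸ min_le_left _ _)
  rcases hmin with h | h
  · obtain ⟨h₁, h₂⟩ := hle_x h
    exact identric_mul_identric_le ht hy₁.1 hy₂.1 h₁ h₂ hsum
  · obtain ⟨h₁, h₂⟩ := hle_x h
    rw [mul_comm]
    exact identric_mul_identric_le ht hy₂.1 hy₁.1 h₁ h₂ (by linarith)

/-- Sufficient condition for the entropic relation: if the minimum of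
`x₁, x₂, y₁, y₂ ∈ (0, 1-t)` is `y₁` or `y₂` and `y₁ + y₂ ≤ x₁ + x₂`, then
`μ(x₁) μ(x₂) ≥ μ(y₁) μ(y₂)`. -/
theorem identric_prod_ge (t : ℝ) (ht : 0 < t)
    (x₁ x₂ y₁ y₂ : ℝ)
    (hx₁ : x₁ ∈ Set.Ioo (0 : ℝ) (1 - t)) (hx₂ : x₂ ∈ Set.Ioo (0 : ℝ) (1 - t))
    (hy₁ : y₁ ∈ Set.Ioo (0 : ℝ) (1 - t)) (hy₂ : y₂ ∈ Set.Ioo (0 : ℝ) (1 - t))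
    (hmin : min (min x₁ x₂) (min y₁ y₂) = y₁ ∨ min (min x₁ x₂) (min y₁ y₂) = y₂)
    (hsum : y₁ + y₂ ≤ x₁ + x₂) :
    identric t y₁ * identric t y₂ ≤ identric t x₁ * identric t x₂ :=
  identric_prod_ge_general t ht x₁ x₂ y₁ y₂ hy₁ hy₂ hmin hsum
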